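/- There exist a finite partially ordered set C and a C-module M over ℝ whose local structure is not stable: there is an object x such that for every N there exists n ≥ N with 𝓕ₙ(M)(x) ≠ 𝓕ₙ₊₁(M)(x). -/

import Mathlib

/-!
STATEMENT 15: There exist a finite poset C and a C-module M over ℝ whose local
structure is not stable: at some object x, for every N there is n ≥ N with
𝓕ₙ(M)(x) ≠ 𝓕ₙ₊₁(M)(x).
-/

open scoped Classical

/-- The intersection closure `⟨S⟩` of a finite set of subspaces. -/
noncomputable def interClosure {k V : Type*} [Field k] [AddCommGroup V] [Module k V]
    (S : Finset (Submodule k V)) : Finset (Submodule k V) :=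
  (insert ⊥ (insert ⊤ S)).powerset.image fun T => T.inf id

/-- A module over a finite poset `C`, with values in finite-dimensional real vector
spaces: a functor from `C` to `(vect/ℝ)`. -/
structure FinPosetModule where
  C : Type
  [instPO : PartialOrder C]
  [instFin : Fintype C]
  M : C → Type
  [instAdd : ∀ x, AddCommGroup (M x)]
  [instMod : ∀ x, Module ℝ (M x)]
  [instFD : ∀ x, FiniteDimensional ℝ (M x)]
  φ : ∀ x y : C, x ≤ y → (M x →ₗ[ℝ] M y)
  hid : ∀ (x) (h : x ≤ x), φ x x h = LinearMap.id
  hcomp : ∀ (x y z) (hxy : x ≤ y) (hyz : y ≤ z),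
    (φ y z hyz).comp (φ x y hxy) = φ x z (hxy.trans hyz)

attribute [instance] FinPosetModule.instPO FinPosetModule.instFin FinPosetModule.instAdd
  FinPosetModule.instMod FinPosetModule.instFD

/-- The local structure 𝓕ₙ(M)(x) of a module over a finite poset. -/
noncomputable def LS (P : FinPosetModule) : ℕ → ∀ x : P.C, Finset (Submodule ℝ (P.M x))
  | 0 => fun x =>
      interClosure
        ((Finset.univ.image fun y : P.C =>
            if h : x ≤ y then LinearMap.ker (P.φ x y h) else ⊤) ∪
          (Finset.univ.image fun z : P.C =>
            if h : z ≤ x then LinearMap.range (P.φ z x h) else ⊥))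
  | (n + 1) => fun x =>
      interClosure
        (LS P n x ∪
          (Finset.univ.biUnion fun y : P.C =>
            if h : x ≤ y then (LS P n y).image fun W => Submodule.comap (P.φ x y h) W
            else ∅) ∪
          (Finset.univ.biUnion fun z : P.C =>
            if h : z ≤ x then (LS P n z).image fun W => Submodule.map (P.φ z x h) W
            else ∅))

/-! ### Auxiliary material -/

lemma subset_interClosure {k V : Type*} [Field k] [AddCommGroup V] [Module k V]
    (S : Finset (Submodule k V)) : S ⊆ interClosure S := by
  intro s hs
  simp only [interClosure, Finset.mem_image]
  refine ⟨{s}, ?_, by simp⟩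
  simp [Finset.singleton_subset_iff, hs]

lemma LS_succ_subset (P : FinPosetModule) (n : ℕ) (x : P.C) :
    LS P n x ⊆ LS P (n + 1) x := by
  intro W hW
  apply subset_interClosure
  simp only [Finset.mem_union]
  exact Or.inl (Or.inl hW)

lemma LS_subset (P : FinPosetModule) {n m : ℕ} (h : n ≤ m) (x : P.C) :
    LS P n x ⊆ LS P m x := by
  induction m with
  | zero => simpa [Nat.le_zero.mp h]
  | succ m ih =>
      rcases Nat.lt_or_ge n (m + 1) with h' | h'
      · exact (ih (Nat.lt_succ_iff.mp h')).trans (LS_succ_subset P m x)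
      · have : n = m + 1 := le_antisymm h h'
        subst this
        exact subset_rfl

lemma range_mem_LS0 (P : FinPosetModule) {z x : P.C} (h : z ≤ x) :
    LinearMap.range (P.φ z x h) ∈ LS P 0 x := by
  apply subset_interClosure
  simp only [Finset.mem_union, Finset.mem_image]
  refine Or.inr ⟨z, Finset.mem_univ z, ?_⟩
  rw [dif_pos h]

lemma map_mem_LS (P : FinPosetModule) {n : ℕ} {z x : P.C} (h : z ≤ x)
    {W : Submodule ℝ (P.M z)} (hW : W ∈ LS P n z) :
    Submodule.map (P.φ z x h) W ∈ LS P (n + 1) x := by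
  apply subset_interClosure
  simp only [Finset.mem_union, Finset.mem_biUnion]
  refine Or.inr ⟨z, Finset.mem_univ z, ?_⟩
  rw [dif_pos h]
  exact Finset.mem_image_of_mem _ hW

lemma comap_mem_LS (P : FinPosetModule) {n : ℕ} {x y : P.C} (h : x ≤ y)
    {W : Submodule ℝ (P.M y)} (hW : W ∈ LS P n y) :
    Submodule.comap (P.φ x y h) W ∈ LS P (n + 1) x := by
  apply subset_interClosure
  simp only [Finset.mem_union, Finset.mem_biUnion]
  refine Or.inl (Or.inr ⟨y, Finset.mem_univ y, ?_⟩)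
  rw [dif_pos h]
  exact Finset.mem_image_of_mem _ hW

/-! ### The concrete example -/

inductive Obj : Type where
  | a | b | e | c | d
deriving DecidableEq

instance : Fintype Obj := ⟨{.a, .b, .e, .c, .d}, by intro x; cases x <;> simp⟩

def Obj.ble : Obj → Obj → Bool
  | .a, .c => true
  | .a, .d => true
  | .b, .c => true
  | .b, .d => true
  | .e, .c => true
  | .a, .a => true
  | .b, .b => true
  | .c, .c => true
  | .d, .d => true
  | .e, .e => true
  | _, _ => false

instance : PartialOrder Obj where
  le x y := Obj.ble x y = true
  le_refl := by intro a; cases a <;> rfl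
  le_trans := by intro a b c; cases a <;> cases b <;> cases c <;> simp [Obj.ble]
  le_antisymm := by intro a b; cases a <;> cases b <;> simp [Obj.ble]

instance : DecidableRel (α := Obj) (· ≤ ·) :=
  fun x y => inferInstanceAs (Decidable (Obj.ble x y = true))

noncomputable def Smap : (ℝ × ℝ) →ₗ[ℝ] (ℝ × ℝ) :=
  LinearMap.prod (LinearMap.fst ℝ ℝ ℝ) (LinearMap.fst ℝ ℝ ℝ + LinearMap.snd ℝ ℝ ℝ)

noncomputable def Pmap : (ℝ × ℝ) →ₗ[ℝ] (ℝ × ℝ) :=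
  LinearMap.prod (LinearMap.fst ℝ ℝ ℝ) 0

noncomputable def phi : ∀ x y : Obj, x ≤ y → ((ℝ × ℝ) →ₗ[ℝ] (ℝ × ℝ)) :=
  fun x y _ => match x, y with
  | .b, .c => Smap
  | .e, .c => Pmap
  | _, _ => LinearMap.id

noncomputable def P15 : FinPosetModule where
  C := Obj
  M := fun _ => ℝ × ℝ
  φ := phi
  hid := by intro x h; cases x <;> rfl
  hcomp := by
    intro x y z hxy hyz
    cases x <;> cases y <;> cases z <;>
      first
        | exact absurd hxy (by decide)
        | exact absurd hyz (by decide)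
        | exact LinearMap.comp_id _
        | exact LinearMap.id_comp _
        | rfl

noncomputable instance (x : Obj) : AddCommGroup (P15.M x) := P15.instAdd x

noncomputable instance (x : Obj) : Module ℝ (P15.M x) := P15.instMod x

/-- The line `y = n x` in `ℝ²`, as the range of `x ↦ (x, n x)`. -/
noncomputable def lineMap (n : ℕ) : ℝ →ₗ[ℝ] (ℝ × ℝ) :=
  LinearMap.prod LinearMap.id ((n : ℝ) • LinearMap.id)

noncomputable def Line (n : ℕ) : Submodule ℝ (ℝ × ℝ) := LinearMap.range (lineMap n)

lemma Line_injective : Function.Injective Line := by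
  intro n m hnm
  have h1 : ((1 : ℝ), (n : ℝ)) ∈ Line n := ⟨1, by simp [lineMap]⟩
  rw [hnm] at h1
  obtain ⟨x, hx⟩ := h1
  simp only [lineMap, LinearMap.prod_apply, Function.prod, LinearMap.id_coe, id_eq,
    LinearMap.smul_apply, smul_eq_mul, Prod.mk.injEq] at hx
  obtain ⟨hx1, hx2⟩ := hx
  subst hx1
  have : (m : ℝ) = n := by simpa using hx2
  exact_mod_cast this.symm

lemma map_Smap_Line (n : ℕ) : Submodule.map Smap (Line n) = Line (n + 1) := by
  have : Smap.comp (lineMap n) = lineMap (n + 1) := by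
    ext x <;> simp [Smap, lineMap] <;> ring
  rw [Line, ← LinearMap.range_comp, this, Line]

lemma range_Pmap : LinearMap.range Pmap = Line 0 := by
  ext ⟨u, v⟩
  constructor
  · rintro ⟨⟨p, q⟩, hp⟩
    exact ⟨p, by simpa [Pmap, lineMap] using hp⟩
  · rintro ⟨x, hx⟩
    exact ⟨(x, 0), by simpa [Pmap, lineMap] using hx⟩


set_option linter.constructorNameAsVariable false in
lemma LS_congr {m k : ℕ} (h : m = k) (x : Obj) : LS P15 m x = LS P15 k x := by rw [h]

set_option linter.constructorNameAsVariable false in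
lemma LS_step (n k k' : ℕ) (hk : k' = k + 4) (h : Line n ∈ LS P15 k Obj.c) :
    Line (n + 1) ∈ LS P15 k' Obj.c := by
  have hac : Obj.a ≤ Obj.c := by decide
  have had : Obj.a ≤ Obj.d := by decide
  have hbd : Obj.b ≤ Obj.d := by decide
  have hbc : Obj.b ≤ Obj.c := by decide
  have e1 : Submodule.comap (P15.φ Obj.a Obj.c hac) (Line n) = Line n := Submodule.comap_id _
  have h1 : Line n ∈ LS P15 (1+k) Obj.a :=
    LS_congr (show k+1 = 1+k by omega) Obj.a ▸ (e1 ▸ comap_mem_LS P15 hac h)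
  have e2 : Submodule.map (P15.φ Obj.a Obj.d had) (Line n) = Line n := Submodule.map_id _
  have h2 : Line n ∈ LS P15 (1+(1+k)) Obj.d :=
    LS_congr (show (1+k)+1 = 1+(1+k) by omega) Obj.d ▸ (e2 ▸ map_mem_LS P15 had h1)
  have e3 : Submodule.comap (P15.φ Obj.b Obj.d hbd) (Line n) = Line n := Submodule.comap_id _
  have h3 : Line n ∈ LS P15 (1+(1+(1+k))) Obj.b :=
    LS_congr (show (1+(1+k))+1 = 1+(1+(1+k)) by omega) Obj.b ▸ (e3 ▸ comap_mem_LS P15 hbd h2)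
  have e4 : Submodule.map (P15.φ Obj.b Obj.c hbc) (Line n) = Line (n+1) := map_Smap_Line n
  have h4 : Line (n+1) ∈ LS P15 (1+(1+(1+(1+k)))) Obj.c :=
    LS_congr (show (1+(1+(1+k)))+1 = 1+(1+(1+(1+k))) by omega) Obj.c ▸
      (e4 ▸ map_mem_LS P15 hbc h3)
  exact LS_congr (show 1+(1+(1+(1+k))) = k' by omega) Obj.c ▸ h4

set_option linter.constructorNameAsVariable false in
lemma Line_mem_LS : ∀ n m : ℕ, m = 4 * n → Line n ∈ LS P15 m Obj.c := by
  intro n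
  induction n with
  | zero =>
      intro m hm
      have hm0 : m = 0 := by omega
      subst hm0
      have hec : Obj.e ≤ Obj.c := by decide
      have h0 : LinearMap.range (P15.φ Obj.e Obj.c hec) ∈ LS P15 0 Obj.c :=
        range_mem_LS0 P15 hec
      have e0 : LinearMap.range (P15.φ Obj.e Obj.c hec) = Line 0 := range_Pmap
      exact e0 ▸ h0
  | succ n ih =>
      intro m hm
      exact LS_step n (4*n) m (by omega) (ih (4*n) rfl)

set_option linter.constructorNameAsVariable false in
theorem stmt15 :
    ∃ (P : FinPosetModule) (x : P.C), ∀ N : ℕ, ∃ n : ℕ, N ≤ n ∧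
      LS P n x ≠ LS P (n + 1) x := by
  refine ⟨P15, Obj.c, ?_⟩
  intro N
  by_contra hcon
  push_neg at hcon
  have hconst : ∀ k : ℕ, LS P15 (N + k) Obj.c = LS P15 N Obj.c := by
    intro k
    induction k with
    | zero => rfl
    | succ k ih =>
        rw [← ih, ← Nat.add_assoc]
        exact (hcon (N + k) (Nat.le_add_right N k)).symm
  have hall : ∀ n : ℕ, Line n ∈ LS P15 N Obj.c := by
    intro n
    have h1 : Line n ∈ LS P15 (N + 4 * n) Obj.c :=
      LS_subset P15 (by omega) Obj.c (Line_mem_LS n (4 * n) rfl)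
    rwa [hconst (4 * n)] at h1
  have finj : Function.Injective (fun n => (⟨Line n, hall n⟩ : {W // W ∈ LS P15 N Obj.c})) :=
    fun n m hnm => Line_injective (congrArg Subtype.val hnm)
  have : Finite ℕ := Finite.of_injective _ finj
  exact not_finite ℕ
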